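/- Fix l, d, s ∈ ℕ with 0 ≤ d ≤ ⌊l/2⌋, and set P^l_{d,s} := {P ∈ ℂ[X₀,X₁]_l ∖ {0} : dim_ℂ C_P^d = s} and P^l_r := {P ∈ ℂ[X₀,X₁]_l ∖ {0} : d₁(P) = r}. Then: P^l_{d,s} = P^l_{l−d+1−s} if l − 2d < s ≤ l − d; P^l_{d,s} = ⋃_{d+1 ≤ r ≤ ⌊l/2⌋+1} P^l_r if s = l − 2d; and P^l_{d,s} = ∅ if s < l − 2d or s > l − d. -/

import Mathlib

/-!
Common definitions: the apolar action of `ℂ[X₀,X₁]` on itself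
(`Q • P := Q(∂/∂X₀, ∂/∂X₁)(P)`), the apolar ideal `Ann(P)` and its homogeneous
components, the cokernel `C_P^d` of `Q ↦ Q • P : ℂ[X₀,X₁]_d → ℂ[X₀,X₁]_{l-d}`,
the invariant `d₁(P)` and the Waring rank.
-/

open MvPolynomial

noncomputable section

/-- The partial derivative `∂/∂Xᵢ` as a `ℂ`-linear endomorphism of `ℂ[X₀,X₁]`. -/
def pd (i : Fin 2) : Module.End ℂ (MvPolynomial (Fin 2) ℂ) := (pderiv (R := ℂ) i).toLinearMap

lemma pd_comm : Commute (pd 0) (pd 1) := by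
  apply LinearMap.ext
  intro P
  induction P using MvPolynomial.induction_on' with
  | monomial s a =>
      simp [pd, Module.End.mul_apply, pderiv_monomial]
      rw [tsub_right_comm, mul_right_comm]
  | add p q hp hq => simp_all [Module.End.mul_apply, map_add]

/-- The endomorphism `∂₀^{m 0} ∘ ∂₁^{m 1}` of `ℂ[X₀,X₁]`, as a monoid homomorphism in the
exponent `m`. -/
def derivMonomialHom :
    Multiplicative (Fin 2 →₀ ℕ) →* Module.End ℂ (MvPolynomial (Fin 2) ℂ) where
  toFun m := pd 0 ^ (Multiplicative.toAdd m 0) * pd 1 ^ (Multiplicative.toAdd m 1)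
  map_one' := by simp
  map_mul' a b := by
    simp only [toAdd_mul, Finsupp.add_apply, pow_add]
    exact (Commute.pow_pow pd_comm _ _).mul_mul_mul_comm _ _

/-- The representation of `ℂ[X₀,X₁]` by constant-coefficient differential operators:
`diffOp Q = Q(∂/∂X₀, ∂/∂X₁)`.  It is the morphism of `ℂ`-algebras sending `X i` to
`∂/∂Xᵢ`. -/
def diffOp : MvPolynomial (Fin 2) ℂ →ₐ[ℂ] Module.End ℂ (MvPolynomial (Fin 2) ℂ) :=
  AddMonoidAlgebra.lift ℂ _ (Fin 2 →₀ ℕ) derivMonomialHom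

/-- The apolar action `Q • P := Q(∂/∂X₀, ∂/∂X₁)(P)`. -/
def apolar (Q P : MvPolynomial (Fin 2) ℂ) : MvPolynomial (Fin 2) ℂ := diffOp Q P

/-- For fixed `P`, the map `Q ↦ Q • P` is `ℂ`-linear in `Q`. -/
def apolarLM (P : MvPolynomial (Fin 2) ℂ) :
    MvPolynomial (Fin 2) ℂ →ₗ[ℂ] MvPolynomial (Fin 2) ℂ :=
  (LinearMap.applyₗ P).comp diffOp.toLinearMap

lemma apolarLM_apply (P Q : MvPolynomial (Fin 2) ℂ) : apolarLM P Q = apolar Q P := rfl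

/-- The apolar ideal `Ann(P) = {Q | Q • P = 0}`. -/
def annIdeal (P : MvPolynomial (Fin 2) ℂ) : Ideal (MvPolynomial (Fin 2) ℂ) where
  carrier := {Q | apolar Q P = 0}
  zero_mem' := by simp [apolar]
  add_mem' := by
    intro a b ha hb
    simp only [Set.mem_setOf_eq, apolar, map_add, LinearMap.add_apply] at *
    rw [ha, hb, add_zero]
  smul_mem' := by
    intro c Q hQ
    simp only [Set.mem_setOf_eq, smul_eq_mul, apolar, map_mul, Module.End.mul_apply] at *
    rw [hQ, map_zero]

/-- The degree-`d` homogeneous component `Ann(P)_d` of the apolar ideal of `P`. -/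
def annComp (P : MvPolynomial (Fin 2) ℂ) (d : ℕ) :
    Submodule ℂ (MvPolynomial (Fin 2) ℂ) :=
  homogeneousSubmodule (Fin 2) ℂ d ⊓ LinearMap.ker (apolarLM P)

/-- The image of `ℂ[X₀,X₁]_d` under `Q ↦ Q • P`, viewed as a subspace of `ℂ[X₀,X₁]_{l-d}`
(for `P` homogeneous of degree `l` and `d ≤ l` the image is indeed contained in
`ℂ[X₀,X₁]_{l-d}`). -/
def apolarImage (P : MvPolynomial (Fin 2) ℂ) (l d : ℕ) :
    Submodule ℂ (homogeneousSubmodule (Fin 2) ℂ (l - d)) :=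
  Submodule.comap (homogeneousSubmodule (Fin 2) ℂ (l - d)).subtype
    (Submodule.map (apolarLM P) (homogeneousSubmodule (Fin 2) ℂ d))

/-- `C_P^d`: the cokernel of the `ℂ`-linear map `ℂ[X₀,X₁]_d → ℂ[X₀,X₁]_{l-d}`, `Q ↦ Q • P`. -/
abbrev ApolarCoker (P : MvPolynomial (Fin 2) ℂ) (l d : ℕ) :=
  (homogeneousSubmodule (Fin 2) ℂ (l - d)) ⧸ apolarImage P l d

/-- `d₁(P)`: the minimal degree of a nonzero homogeneous polynomial in `Ann(P)`. -/
def d1 (P : MvPolynomial (Fin 2) ℂ) : ℕ :=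
  sInf {d | ∃ Q : MvPolynomial (Fin 2) ℂ, Q ≠ 0 ∧ Q.IsHomogeneous d ∧ apolar Q P = 0}

/-- The Waring rank of a binary form `P` of degree `l`: the least `r` such that `P` is a sum
of `r` `l`-th powers of linear forms. -/
def waringRank (l : ℕ) (P : MvPolynomial (Fin 2) ℂ) : ℕ :=
  sInf {r | ∃ lam : Fin r → MvPolynomial (Fin 2) ℂ,
    (∀ i, (lam i).IsHomogeneous 1) ∧ P = ∑ i, lam i ^ l}

end

/-! The cokernel `C_P^d` has dimension `(l - d + 1) - h_P(d)`, where `h_P(a) = dim (ℂ[X₀,X₁]_a • P)`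
is the Hilbert function of the apolar algebra `ℂ[X₀,X₁] ⧸ Ann(P)`. For `d ≤ ⌊l/2⌋` one has
`h_P(d) = min (d + 1) (d₁(P))`. Below `d₁` the map `Q ↦ Q • P` is injective. From `d₁` on, the
multiples of a minimal annihilator bound `h_P` above by `d₁`, and `h_P` does not increase, since
multiplying a nonzero space of forms of one degree by `X₀` and by `X₁` yields a strictly larger
space. Finally the apolarity pairing makes `h_P` symmetric, `h_P(a) = h_P(l - a)`, so
`h_P(d) ≥ h_P(l - d₁ + 1) = h_P(d₁ - 1) = d₁`. As `1 ≤ d₁ ≤ ⌊l/2⌋ + 1`, the three cases are then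
arithmetic. -/

open MvPolynomial Module

section

variable {σ K : Type*} [Field K]

theorem Finsupp.degree_fin_two {M : Type*} [AddCommMonoid M] (a : Fin 2 →₀ M) :
    a.degree = a 0 + a 1 := by
  rw [Finsupp.degree_eq_sum, Fin.sum_univ_two]

theorem MvPolynomial.IsHomogeneous.eq_C_coeff_zero {R : Type*} [CommSemiring R]
    {p : MvPolynomial σ R} (hp : p.IsHomogeneous 0) :
    p = C (coeff 0 p) :=
  totalDegree_eq_zero_iff_eq_C.mp (by rwa [totalDegree_zero_iff_isHomogeneous])

theorem MvPolynomial.IsHomogeneous.add_eq_of_mem_support {R : Type*} [CommSemiring R]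
    {Q : MvPolynomial (Fin 2) R} {d : ℕ} (hQ : Q.IsHomogeneous d) {a : Fin 2 →₀ ℕ}
    (ha : a ∈ Q.support) : a 0 + a 1 = d := by
  rw [← Finsupp.degree_fin_two, Finsupp.degree_eq_weight_one]
  exact hQ (mem_support_iff.mp ha)

instance [Finite σ] (n : ℕ) : FiniteDimensional K (homogeneousSubmodule σ K n) :=
  Module.Finite.iff_fg.mpr (homogeneousSubmodule_fg σ K n)

theorem finrank_homogeneousSubmodule [Fintype σ] (n : ℕ) :
    finrank K (homogeneousSubmodule σ K n) = (Fintype.card σ + n - 1).choose n := by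
  classical
  have hset : {d : σ →₀ ℕ | d.degree = n} =
      ↑(Finset.univ.finsuppAntidiag n : Finset (σ →₀ ℕ)) := by
    ext d
    simp [Finset.mem_finsuppAntidiag, Finsupp.degree_eq_sum]
  rw [homogeneousSubmodule_eq_finsupp_supported, ← restrictSupport,
    finrank_eq_nat_card_basis (basisRestrictSupport K _), hset, Nat.card_coe_set_eq,
    Set.ncard_coe_finset, Finset.card_finsuppAntidiag_nat_eq_choose, Finset.card_univ]

theorem finrank_homogeneousSubmodule_fin_two (n : ℕ) :
    finrank K (homogeneousSubmodule (Fin 2) K n) = n + 1 := by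
  rw [finrank_homogeneousSubmodule, Fintype.card_fin, show 2 + n - 1 = n + 1 by omega,
    Nat.choose_succ_self_right]

theorem LinearMap.finrank_map_add_finrank_inf_ker {V W : Type*} [AddCommGroup V] [Module K V]
    [AddCommGroup W] [Module K W] (f : V →ₗ[K] W) (U : Submodule K V) [FiniteDimensional K U] :
    finrank K (U.map f) + finrank K ↥(U ⊓ LinearMap.ker f) = finrank K U := by
  rw [← (f.domRestrict U).finrank_range_add_finrank_ker, LinearMap.range_domRestrict,
    LinearMap.ker_domRestrict, ← Submodule.map_comap_subtype]
  exact congrArg _ (Submodule.equivMapOfInjective _ U.injective_subtype _).finrank_eq.symm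

theorem finrank_lt_finrank_map_mulLeft_X_sup {i j : σ} (hij : i ≠ j) {d : ℕ}
    {V : Submodule K (MvPolynomial σ K)} [FiniteDimensional K V]
    (hV : V ≤ homogeneousSubmodule σ K d) (hV0 : V ≠ ⊥) :
    finrank K V < finrank K ↥(V.map (LinearMap.mulLeft K (X i)) ⊔
      V.map (LinearMap.mulLeft K (X j))) := by
  by_contra! hle
  have hinj : Function.Injective (LinearMap.mulLeft K (X i : MvPolynomial σ K)) :=
    fun _ _ h => mul_left_cancel₀ (X_ne_zero i) h
  have hXiV : V.map (LinearMap.mulLeft K (X i)) = V.map (LinearMap.mulLeft K (X i)) ⊔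
      V.map (LinearMap.mulLeft K (X j)) :=
    Submodule.eq_of_le_of_finrank_le le_sup_left
      (hle.trans (Submodule.equivMapOfInjective _ hinj V).finrank_eq.le)
  -- Hence `X j • V ⊆ X i • V`; as `X i` is prime and does not divide `X j`, every element of `V`
  -- is then divisible by all powers of `X i`, which its degree forbids.
  have hdvd : ∀ k, ∀ A ∈ V, (X i : MvPolynomial σ K) ^ k ∣ A := by
    intro k
    induction k with
    | zero => simp
    | succ k ih =>
      intro A hA
      obtain ⟨B, hB, hBA⟩ : X j * A ∈ V.map (LinearMap.mulLeft K (X i)) :=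
        hXiV ▸ Submodule.mem_sup_right ⟨A, hA, rfl⟩
      refine (X_prime (R := K) (i := i)).pow_dvd_of_dvd_mul_left _
        ((X_dvd_X (R := K)).not.mpr hij) ?_
      rw [← hBA, pow_succ']
      exact mul_dvd_mul_left _ (ih B hB)
  obtain ⟨A, hA, hA0⟩ := (Submodule.ne_bot_iff V).mp hV0
  obtain ⟨C, rfl⟩ := hdvd (d + 1) A hA
  have hdeg := (hV hA).totalDegree hA0
  rw [totalDegree_mul_of_isDomain (pow_ne_zero _ (X_ne_zero i)) (right_ne_zero_of_mul hA0),
    totalDegree_X_pow] at hdeg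
  omega

end

local notation "ℂ[X₀,X₁]" => MvPolynomial (Fin 2) ℂ
local notation "ℂ[X₀,X₁]_" n:max => homogeneousSubmodule (Fin 2) ℂ n

lemma pd_pow_monomial (i : Fin 2) (k : ℕ) (a : Fin 2 →₀ ℕ) (c : ℂ) :
    (pd i ^ k) (monomial a c) =
      monomial (a - Finsupp.single i k) (c * (a i).descFactorial k) := by
  induction k with
  | zero => simp
  | succ k ih =>
    rw [pow_succ', Module.End.mul_apply, ih]
    change pderiv i _ = _
    rw [pderiv_monomial,
      tsub_tsub, ← Finsupp.single_add, Finsupp.tsub_apply, Finsupp.single_eq_same,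
      Nat.descFactorial_succ]
    push_cast
    ring_nf

lemma diffOp_monomial (a : Fin 2 →₀ ℕ) (c : ℂ) :
    diffOp (monomial a c) = c • (pd 0 ^ a 0 * pd 1 ^ a 1) := by
  rw [← single_eq_monomial]
  exact AddMonoidAlgebra.lift_single _ _ _

lemma apolar_monomial (a b : Fin 2 →₀ ℕ) (c c' : ℂ) :
    apolar (monomial a c) (monomial b c') =
      monomial (b - a) (c * c' * ((b 0).descFactorial (a 0) * (b 1).descFactorial (a 1))) := by
  have hsplit : b - Finsupp.single 1 (a 1) - Finsupp.single 0 (a 0) = b - a := by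
    ext i; fin_cases i <;> simp
  have h0 : (b - Finsupp.single 1 (a 1) : Fin 2 →₀ ℕ) 0 = b 0 := by simp
  rw [apolar, diffOp_monomial, LinearMap.smul_apply, Module.End.mul_apply, pd_pow_monomial,
    pd_pow_monomial, hsplit, h0, smul_monomial, smul_eq_mul]
  ring_nf

lemma apolar_mul (Q Q' P : ℂ[X₀,X₁]) : apolar (Q * Q') P = apolar Q (apolar Q' P) := by
  rw [apolar, map_mul]
  rfl

lemma apolar_C (c : ℂ) (P : ℂ[X₀,X₁]) : apolar (C c) P = c • P := by
  rw [apolar, C_apply, diffOp_monomial]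
  simp

lemma apolar_eq_sum (Q P : ℂ[X₀,X₁]) :
    apolar Q P = ∑ a ∈ Q.support, ∑ b ∈ P.support,
      apolar (monomial a (coeff a Q)) (monomial b (coeff b P)) := by
  conv_lhs => rw [← Q.support_sum_monomial_coeff, ← P.support_sum_monomial_coeff]
  simp only [apolar, map_sum, LinearMap.sum_apply]
  exact Finset.sum_comm

lemma apolar_isHomogeneous {Q P : ℂ[X₀,X₁]} {d l : ℕ} (hQ : Q.IsHomogeneous d)
    (hP : P.IsHomogeneous l) : (apolar Q P).IsHomogeneous (l - d) := by
  rw [← mem_homogeneousSubmodule, apolar_eq_sum]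
  refine Submodule.sum_mem _ fun a ha => Submodule.sum_mem _ fun b hb => ?_
  rw [apolar_monomial]
  by_cases hab : a 0 ≤ b 0 ∧ a 1 ≤ b 1
  · apply isHomogeneous_monomial
    have := hQ.add_eq_of_mem_support ha
    have := hP.add_eq_of_mem_support hb
    simp only [Finsupp.degree_fin_two, Finsupp.tsub_apply]
    omega
  · have : (b 0).descFactorial (a 0) * (b 1).descFactorial (a 1) = 0 := by
      simp only [mul_eq_zero, Nat.descFactorial_eq_zero_iff_lt]
      omega
    simp [← Nat.cast_mul, this]

lemma apolar_monomial_of_add_eq {a b : Fin 2 →₀ ℕ} (hab : a 0 + a 1 = b 0 + b 1) (c c' : ℂ) :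
    apolar (monomial a c) (monomial b c') =
      if a = b then C (c * c' * ((a 0).factorial * (a 1).factorial)) else 0 := by
  rw [apolar_monomial]
  split_ifs with h
  · simp [h, Nat.descFactorial_self]
  · have : (b 0).descFactorial (a 0) * (b 1).descFactorial (a 1) = 0 := by
      simp only [mul_eq_zero, Nat.descFactorial_eq_zero_iff_lt]
      have : a 0 ≠ b 0 ∨ a 1 ≠ b 1 := by
        by_contra! h'
        exact h (Finsupp.ext fun i => by fin_cases i <;> simp [h'.1, h'.2])
      omega
    simp [← Nat.cast_mul, this]

lemma apolar_comm {Q T : ℂ[X₀,X₁]} {n : ℕ} (hQ : Q.IsHomogeneous n) (hT : T.IsHomogeneous n) :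
    apolar Q T = apolar T Q := by
  rw [apolar_eq_sum, apolar_eq_sum T, Finset.sum_comm]
  refine Finset.sum_congr rfl fun b hb => Finset.sum_congr rfl fun a ha => ?_
  have hab : a 0 + a 1 = b 0 + b 1 := by
    rw [hQ.add_eq_of_mem_support ha, hT.add_eq_of_mem_support hb]
  rw [apolar_monomial_of_add_eq hab, apolar_monomial_of_add_eq hab.symm]
  by_cases h : a = b
  · subst h; simp [mul_comm]
  · simp [h, Ne.symm h]

lemma eq_zero_of_forall_apolar_monomial {S : ℂ[X₀,X₁]} {n : ℕ} (hS : S.IsHomogeneous n)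
    (h : ∀ a : Fin 2 →₀ ℕ, a 0 + a 1 = n → apolar (monomial a 1) S = 0) : S = 0 := by
  by_contra hS0
  obtain ⟨a, ha⟩ := support_nonempty.mpr hS0
  have hdeg := hS.add_eq_of_mem_support ha
  have hsingle : apolar (monomial a 1) S =
      C (coeff a S * ((a 0).factorial * (a 1).factorial)) := by
    conv_lhs => rw [← S.support_sum_monomial_coeff]
    rw [apolar, map_sum, Finset.sum_eq_single_of_mem a ha, ← apolar]
    · simpa using apolar_monomial_of_add_eq rfl (1 : ℂ) (coeff a S)
    · intro b hb hba
      have := apolar_monomial_of_add_eq (b := b) (by rw [hdeg, hS.add_eq_of_mem_support hb])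
        (1 : ℂ) (coeff b S)
      rwa [if_neg (Ne.symm hba), apolar] at this
  refine mem_support_iff.mp ha ?_
  simpa [hsingle, Nat.factorial_ne_zero] using h a hdeg

noncomputable def apolarPairing (n : ℕ) : ℂ[X₀,X₁]_n →ₗ[ℂ] Module.Dual ℂ (ℂ[X₀,X₁]_n) :=
  (diffOp.toLinearMap.compl₁₂ (ℂ[X₀,X₁]_n).subtype (ℂ[X₀,X₁]_n).subtype).compr₂ (lcoeff ℂ 0)

lemma apolarPairing_apply {n : ℕ} (Q T : ℂ[X₀,X₁]_n) :
    apolarPairing n Q T = coeff 0 (apolar Q T) := rfl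

lemma apolarPairing_injective (n : ℕ) : Function.Injective (apolarPairing n) := by
  refine (injective_iff_map_eq_zero _).mpr fun Q hQ => Subtype.ext ?_
  refine eq_zero_of_forall_apolar_monomial Q.2 fun a ha => ?_
  have hT : (monomial a 1 : ℂ[X₀,X₁]).IsHomogeneous n :=
    isHomogeneous_monomial _ (by rw [Finsupp.degree_fin_two, ha])
  have h0 : (apolar Q (monomial a 1)).IsHomogeneous 0 := by
    simpa using apolar_isHomogeneous Q.2 hT
  rw [← apolar_comm Q.2 hT, h0.eq_C_coeff_zero,
    ← apolarPairing_apply Q ⟨_, hT⟩, hQ, LinearMap.zero_apply, map_zero]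

lemma apolarPairing_surjective (n : ℕ) : Function.Surjective (apolarPairing n) :=
  (LinearMap.injective_iff_surjective_of_finrank_eq_finrank Subspace.dual_finrank_eq.symm).mp
    (apolarPairing_injective n)

noncomputable def apolarHilbertFn (P : ℂ[X₀,X₁]) (a : ℕ) : ℕ :=
  finrank ℂ ((ℂ[X₀,X₁]_a).map (apolarLM P))

lemma apolarHilbertFn_add_finrank_annComp (P : ℂ[X₀,X₁]) (a : ℕ) :
    apolarHilbertFn P a + finrank ℂ (annComp P a) = a + 1 := by
  rw [apolarHilbertFn, annComp, LinearMap.finrank_map_add_finrank_inf_ker,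
    finrank_homogeneousSubmodule_fin_two]

lemma map_apolarLM_le {P : ℂ[X₀,X₁]} {l : ℕ} (hP : P.IsHomogeneous l) (a : ℕ) :
    (ℂ[X₀,X₁]_a).map (apolarLM P) ≤ ℂ[X₀,X₁]_(l - a) := by
  rintro _ ⟨Q, hQ, rfl⟩
  rw [apolarLM_apply, mem_homogeneousSubmodule]
  exact apolar_isHomogeneous hQ hP

noncomputable def catalecticant {P : ℂ[X₀,X₁]} {l : ℕ} (hP : P.IsHomogeneous l) {a b : ℕ}
    (hab : a + b = l) : ℂ[X₀,X₁]_a →ₗ[ℂ] ℂ[X₀,X₁]_b :=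
  ((apolarLM P).domRestrict _).codRestrict _ fun Q => by
    simpa [← hab, apolarLM_apply] using apolar_isHomogeneous Q.2 hP

lemma finrank_range_catalecticant {P : ℂ[X₀,X₁]} {l : ℕ} (hP : P.IsHomogeneous l) {a b : ℕ}
    (hab : a + b = l) :
    finrank ℂ (LinearMap.range (catalecticant hP hab)) = apolarHilbertFn P a := by
  obtain rfl : b = l - a := by omega
  rw [catalecticant, LinearMap.range_codRestrict, LinearMap.range_domRestrict]
  exact (Submodule.comapSubtypeEquivOfLe (map_apolarLM_le hP a)).finrank_eq

lemma apolarHilbertFn_eq_of_add_eq {P : ℂ[X₀,X₁]} {l : ℕ} (hP : P.IsHomogeneous l) {a b : ℕ}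
    (hab : a + b = l) : apolarHilbertFn P a = apolarHilbertFn P b := by
  have hba : b + a = l := by omega
  -- The catalecticants in complementary degrees are transposes for the apolarity pairing.
  have htranspose : (catalecticant hP hab).dualMap ∘ₗ apolarPairing b =
      apolarPairing a ∘ₗ catalecticant hP hba := by
    ext T Q
    change coeff 0 (apolar T (apolar Q P)) = coeff 0 (apolar (apolar T P) Q)
    have hTP : (apolar T P).IsHomogeneous a := by
      simpa [← hab] using apolar_isHomogeneous T.2 hP
    rw [apolar_comm hTP Q.2, ← apolar_mul, ← apolar_mul, mul_comm]
  calc apolarHilbertFn P a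
      = finrank ℂ (LinearMap.range ((catalecticant hP hab).dualMap ∘ₗ apolarPairing b)) := by
        rw [LinearMap.range_comp_of_range_eq_top _
            (LinearMap.range_eq_top.mpr (apolarPairing_surjective b)),
          LinearMap.finrank_range_dualMap_eq_finrank_range, finrank_range_catalecticant]
    _ = finrank ℂ (LinearMap.range (catalecticant hP hba)) := by
        rw [htranspose, LinearMap.range_comp]
        exact (Submodule.equivMapOfInjective _ (apolarPairing_injective a) _).finrank_eq.symm
    _ = apolarHilbertFn P b := finrank_range_catalecticant hP hba

lemma mem_annComp {P Q : ℂ[X₀,X₁]} {e : ℕ} :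
    Q ∈ annComp P e ↔ Q.IsHomogeneous e ∧ apolar Q P = 0 := Iff.rfl

instance (P : ℂ[X₀,X₁]) (e : ℕ) : FiniteDimensional ℂ (annComp P e) :=
  Submodule.finiteDimensional_of_le inf_le_left

lemma mul_mem_annComp {P Q R : ℂ[X₀,X₁]} {e k : ℕ} (hR : R.IsHomogeneous k)
    (hQ : Q ∈ annComp P e) : R * Q ∈ annComp P (k + e) :=
  mem_annComp.mpr ⟨hR.mul (mem_annComp.mp hQ).1, by
    rw [apolar_mul, (mem_annComp.mp hQ).2, apolar, map_zero]⟩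

lemma annComp_ne_bot_iff {P : ℂ[X₀,X₁]} {e : ℕ} :
    annComp P e ≠ ⊥ ↔ ∃ Q : ℂ[X₀,X₁], Q ≠ 0 ∧ Q.IsHomogeneous e ∧ apolar Q P = 0 := by
  simp only [Submodule.ne_bot_iff, mem_annComp]
  exact exists_congr fun Q => by tauto

lemma apolarHilbertFn_le {P : ℂ[X₀,X₁]} {l : ℕ} (hP : P.IsHomogeneous l) (a : ℕ) :
    apolarHilbertFn P a ≤ l - a + 1 := by
  have := Submodule.finrank_mono (map_apolarLM_le hP a)
  rwa [finrank_homogeneousSubmodule_fin_two] at this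

lemma annComp_half_succ_ne_bot {P : ℂ[X₀,X₁]} {l : ℕ} (hP : P.IsHomogeneous l) :
    annComp P (l / 2 + 1) ≠ ⊥ := by
  intro h
  have hrank := apolarHilbertFn_add_finrank_annComp P (l / 2 + 1)
  have := apolarHilbertFn_le hP (l / 2 + 1)
  rw [h, finrank_bot] at hrank
  omega

lemma d1_le {P : ℂ[X₀,X₁]} {l : ℕ} (hP : P.IsHomogeneous l) : d1 P ≤ l / 2 + 1 :=
  Nat.sInf_le (annComp_ne_bot_iff.mp (annComp_half_succ_ne_bot hP))

lemma annComp_d1_ne_bot {P : ℂ[X₀,X₁]} {l : ℕ} (hP : P.IsHomogeneous l) :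
    annComp P (d1 P) ≠ ⊥ := by
  rw [annComp_ne_bot_iff]
  exact Nat.sInf_mem (s := {d | ∃ Q : ℂ[X₀,X₁], Q ≠ 0 ∧ Q.IsHomogeneous d ∧ apolar Q P = 0})
    ⟨l / 2 + 1, annComp_ne_bot_iff.mp (annComp_half_succ_ne_bot hP)⟩

lemma annComp_eq_bot_of_lt_d1 {P : ℂ[X₀,X₁]} {e : ℕ} (he : e < d1 P) : annComp P e = ⊥ := by
  by_contra h
  exact (Nat.sInf_le (annComp_ne_bot_iff.mp h) : d1 P ≤ e).not_gt he

lemma annComp_zero_eq_bot {P : ℂ[X₀,X₁]} (hP0 : P ≠ 0) : annComp P 0 = ⊥ := by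
  refine (Submodule.eq_bot_iff _).mpr fun Q hQ0 => ?_
  obtain ⟨hQ, hQP⟩ := mem_annComp.mp hQ0
  rw [hQ.eq_C_coeff_zero, apolar_C, smul_eq_zero] at hQP
  rw [hQ.eq_C_coeff_zero, hQP.resolve_right hP0, map_zero]

lemma one_le_d1 {P : ℂ[X₀,X₁]} {l : ℕ} (hP : P.IsHomogeneous l) (hP0 : P ≠ 0) : 1 ≤ d1 P :=
  Nat.one_le_iff_ne_zero.mpr fun h => annComp_d1_ne_bot hP (h ▸ annComp_zero_eq_bot hP0)

lemma finrank_annComp_lt_succ {P : ℂ[X₀,X₁]} {e : ℕ} (he : annComp P e ≠ ⊥) :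
    finrank ℂ (annComp P e) < finrank ℂ (annComp P (e + 1)) := by
  have hX : ∀ i, (annComp P e).map (LinearMap.mulLeft ℂ (X i)) ≤ annComp P (e + 1) := by
    rintro i _ ⟨Q, hQ, rfl⟩
    simpa [add_comm] using mul_mem_annComp (isHomogeneous_X ℂ i) hQ
  exact (finrank_lt_finrank_map_mulLeft_X_sup (by decide : (0 : Fin 2) ≠ 1) inf_le_left he).trans_le
    (Submodule.finrank_mono (sup_le (hX 0) (hX 1)))

lemma le_finrank_annComp {P : ℂ[X₀,X₁]} {l e : ℕ} (hP : P.IsHomogeneous l) (he : d1 P ≤ e) :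
    e - d1 P + 1 ≤ finrank ℂ (annComp P e) := by
  obtain ⟨Q, hQ0, hQ, hQP⟩ := annComp_ne_bot_iff.mp (annComp_d1_ne_bot hP)
  have hmul : (ℂ[X₀,X₁]_(e - d1 P)).map (LinearMap.mulRight ℂ Q) ≤ annComp P e := by
    rintro _ ⟨R, hR, rfl⟩
    simpa [Nat.sub_add_cancel he] using mul_mem_annComp hR (mem_annComp.mpr ⟨hQ, hQP⟩)
  have hinj : Function.Injective (LinearMap.mulRight ℂ Q) :=
    fun _ _ h => mul_right_cancel₀ hQ0 h
  calc e - d1 P + 1 = finrank ℂ (ℂ[X₀,X₁]_(e - d1 P)) :=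
        (finrank_homogeneousSubmodule_fin_two _).symm
    _ = finrank ℂ ((ℂ[X₀,X₁]_(e - d1 P)).map (LinearMap.mulRight ℂ Q)) :=
        (Submodule.equivMapOfInjective _ hinj _).finrank_eq
    _ ≤ finrank ℂ (annComp P e) := Submodule.finrank_mono hmul

lemma apolarHilbertFn_antitoneOn {P : ℂ[X₀,X₁]} {l : ℕ} (hP : P.IsHomogeneous l) :
    AntitoneOn (apolarHilbertFn P) (Set.Ici (d1 P)) := by
  refine antitoneOn_nat_Ici_of_succ_le fun n hn => ?_
  have hne : annComp P n ≠ ⊥ := fun h => by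
    have := le_finrank_annComp hP hn
    rw [h, finrank_bot] at this
    omega
  have := finrank_annComp_lt_succ hne
  have := apolarHilbertFn_add_finrank_annComp P n
  have := apolarHilbertFn_add_finrank_annComp P (n + 1)
  omega

lemma apolarHilbertFn_eq_min {P : ℂ[X₀,X₁]} {l d : ℕ} (hP : P.IsHomogeneous l) (hP0 : P ≠ 0)
    (hd : d ≤ l / 2) : apolarHilbertFn P d = min (d + 1) (d1 P) := by
  have hrank := apolarHilbertFn_add_finrank_annComp P d
  rcases lt_or_ge d (d1 P) with hlt | hge
  · rw [annComp_eq_bot_of_lt_d1 hlt, finrank_bot] at hrank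
    omega
  · have hlow := le_finrank_annComp hP hge
    -- Injectivity in degree `d1 P - 1` gives the value `d1 P`, which symmetry transports to
    -- degree `l - d1 P + 1 ≥ d`.
    have hprev := apolarHilbertFn_add_finrank_annComp P (d1 P - 1)
    rw [annComp_eq_bot_of_lt_d1 (by have := one_le_d1 hP hP0; omega), finrank_bot] at hprev
    have hsymm := apolarHilbertFn_eq_of_add_eq hP
      (show d1 P - 1 + (l - (d1 P - 1)) = l by have := d1_le hP; omega)
    have hmono := apolarHilbertFn_antitoneOn hP hge (Set.mem_Ici.mpr (by have := d1_le hP; omega))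
      (show d ≤ l - (d1 P - 1) by have := d1_le hP; omega)
    omega

lemma finrank_apolarImage {P : ℂ[X₀,X₁]} {l : ℕ} (hP : P.IsHomogeneous l) (d : ℕ) :
    finrank ℂ (apolarImage P l d) = apolarHilbertFn P d :=
  (Submodule.comapSubtypeEquivOfLe (map_apolarLM_le hP d)).finrank_eq

lemma finrank_apolarCoker {P : ℂ[X₀,X₁]} {l d : ℕ} (hP : P.IsHomogeneous l) (hP0 : P ≠ 0)
    (hd : d ≤ l / 2) : finrank ℂ (ApolarCoker P l d) = l - d + 1 - min (d + 1) (d1 P) := by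
  have hquot : finrank ℂ (ApolarCoker P l d) + finrank ℂ (apolarImage P l d) =
      finrank ℂ (ℂ[X₀,X₁]_(l - d)) :=
    Submodule.finrank_quotient_add_finrank _
  rw [finrank_apolarImage hP, apolarHilbertFn_eq_min hP hP0 hd,
    finrank_homogeneousSubmodule_fin_two] at hquot
  omega

/-- Comparison of the level sets `P^l_{d,s}` of `P ↦ dim C_P^d` with the strata `P^l_r` of
the `d₁`-stratification (case `0 ≤ d ≤ ⌊l/2⌋`). -/
theorem level_sets_small_d (l d s : ℕ) (hd : d ≤ l / 2) :
    (l - 2 * d < s → s ≤ l - d →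
      {P : MvPolynomial (Fin 2) ℂ | P.IsHomogeneous l ∧ P ≠ 0 ∧
          Module.finrank ℂ (ApolarCoker P l d) = s}
        = {P : MvPolynomial (Fin 2) ℂ | P.IsHomogeneous l ∧ P ≠ 0 ∧
            d1 P = l - d + 1 - s}) ∧
    (s = l - 2 * d →
      {P : MvPolynomial (Fin 2) ℂ | P.IsHomogeneous l ∧ P ≠ 0 ∧
          Module.finrank ℂ (ApolarCoker P l d) = s}
        = ⋃ r ∈ Set.Icc (d + 1) (l / 2 + 1),
            {P : MvPolynomial (Fin 2) ℂ | P.IsHomogeneous l ∧ P ≠ 0 ∧ d1 P = r}) ∧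
    (s < l - 2 * d ∨ l - d < s →
      {P : MvPolynomial (Fin 2) ℂ | P.IsHomogeneous l ∧ P ≠ 0 ∧
          Module.finrank ℂ (ApolarCoker P l d) = s} = ∅) := by
  have key {P : ℂ[X₀,X₁]} (hP : P.IsHomogeneous l) (hP0 : P ≠ 0) :
      finrank ℂ (ApolarCoker P l d) = l - d + 1 - min (d + 1) (d1 P) ∧
        1 ≤ d1 P ∧ d1 P ≤ l / 2 + 1 :=
    ⟨finrank_apolarCoker hP hP0 hd, one_le_d1 hP hP0, d1_le hP⟩
  refine ⟨fun hs₁ hs₂ => ?_, fun hs => ?_, fun hs => ?_⟩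
  · ext P
    refine and_congr_right fun hP => and_congr_right fun hP0 => ?_
    have := key hP hP0
    omega
  · ext P
    simp only [Set.mem_iUnion, Set.mem_Icc, exists_prop]
    constructor
    · rintro ⟨hP, hP0, hPs⟩
      have := key hP hP0
      exact ⟨d1 P, by omega, hP, hP0, rfl⟩
    · rintro ⟨r, hr, hP, hP0, rfl⟩
      have := key hP hP0
      exact ⟨hP, hP0, by omega⟩
  · refine Set.eq_empty_of_forall_notMem fun P ⟨hP, hP0, hPs⟩ => ?_
    have := key hP hP0
    omega
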